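/- Let F ⊆ ℝ^K be a closed convex set and let α̂ ∈ ℝ^K. Suppose the set S = {α ∈ F : α_k ≥ α̂_k for all k = 1,…,K} is nonempty and bounded, and suppose there exists some α ∈ F with α_k > α̂_k for all k. Then there exists a unique α* ∈ S maximizing the product ∏_{k=1}^K (α_k − α̂_k) over S. -/
import Mathlib


/-- **Nash bargaining, Theorem 1 of the paper.** If `F ⊆ ℝ^K` is closed
and convex, the set `S` of feasible payoffs dominating the disagreement point `α̂` is
nonempty and bounded, and some feasible payoff strictly dominates `α̂`, then there is a
unique `α* ∈ S` maximizing the Nash product `∏ k, (α k - α̂ k)` over `S`. -/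
theorem nash_bargaining_exists_unique
    {K : ℕ} (hK : 0 < K) (F : Set (Fin K → ℝ)) (hclosed : IsClosed F)
    (hconv : Convex ℝ F) (αhat : Fin K → ℝ)
    (S : Set (Fin K → ℝ)) (hS : S = {α ∈ F | ∀ k, αhat k ≤ α k})
    (hne : S.Nonempty) (hbdd : Bornology.IsBounded S)
    (hdom : ∃ α ∈ F, ∀ k, αhat k < α k) :
    ∃! αstar : Fin K → ℝ, αstar ∈ S ∧
      ∀ α ∈ S, ∏ k, (α k - αhat k) ≤ ∏ k, (αstar k - αhat k) := by
  -- S is closed, hence compact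
  have hSclosed : IsClosed S := by
    rw [hS]
    have : {α ∈ F | ∀ k, αhat k ≤ α k} = F ∩ ⋂ k, {α : Fin K → ℝ | αhat k ≤ α k} := by
      ext α; simp [Set.mem_iInter]
    rw [this]
    exact hclosed.inter (isClosed_iInter fun k =>
      isClosed_le continuous_const (continuous_apply k))
  have hScompact : IsCompact S := Metric.isCompact_of_isClosed_isBounded hSclosed hbdd
  have hgcont : Continuous fun α : Fin K → ℝ => ∏ k, (α k - αhat k) :=
    continuous_finset_prod _ fun k _ => (continuous_apply k).sub continuous_const
  obtain ⟨x, hxS, hmax'⟩ := hScompact.exists_isMaxOn hne hgcont.continuousOn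
  have hmax : ∀ α ∈ S, ∏ k, (α k - αhat k) ≤ ∏ k, (x k - αhat k) := fun α hα => hmax' hα
  -- positivity of the maximal Nash product
  obtain ⟨α0, hα0F, hα0⟩ := hdom
  have hα0S : α0 ∈ S := by rw [hS]; exact ⟨hα0F, fun k => (hα0 k).le⟩
  have hP : 0 < ∏ k, (x k - αhat k) := by
    refine lt_of_lt_of_le ?_ (hmax α0 hα0S)
    exact Finset.prod_pos fun k _ => sub_pos.2 (hα0 k)
  have hxmem := hS ▸ hxS
  have hax : ∀ k, 0 < x k - αhat k := by
    intro k
    rcases (sub_nonneg.2 (hxmem.2 k)).lt_or_eq with h | h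
    · exact h
    · exfalso
      have h0 : ∏ k, (x k - αhat k) = 0 :=
        Finset.prod_eq_zero (Finset.mem_univ k) h.symm
      linarith
  refine ⟨x, ⟨hxS, hmax⟩, ?_⟩
  rintro y ⟨hyS, hymax⟩
  have hymem := hS ▸ hyS
  have hgy : ∏ k, (y k - αhat k) = ∏ k, (x k - αhat k) :=
    le_antisymm (hmax y hyS) (hymax x hxS)
  have hay : ∀ k, 0 < y k - αhat k := by
    intro k
    rcases (sub_nonneg.2 (hymem.2 k)).lt_or_eq with h | h
    · exact h
    · exfalso
      have h0 : ∏ k, (y k - αhat k) = 0 :=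
        Finset.prod_eq_zero (Finset.mem_univ k) h.symm
      rw [hgy] at h0; linarith
  by_contra hne'
  obtain ⟨k0, hk0⟩ : ∃ k, y k ≠ x k := by
    by_contra h; push_neg at h; exact hne' (funext h)
  -- the midpoint
  set z : Fin K → ℝ := fun k => (x k + y k) / 2 with hz
  have hzF : z ∈ F := by
    have := hconv hxmem.1 hymem.1 (by norm_num : (0:ℝ) ≤ 1/2)
      (by norm_num : (0:ℝ) ≤ 1/2) (by norm_num)
    convert this using 1
    funext k
    simp [hz, Pi.smul_apply, smul_eq_mul]
    ring
  have hzS : z ∈ S := by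
    rw [hS]
    refine ⟨hzF, fun k => ?_⟩
    have h1 := hxmem.2 k
    have h2 := hymem.2 k
    simp only [hz]
    linarith
  have hgz_le : ∏ k, (z k - αhat k) ≤ ∏ k, (x k - αhat k) := hmax z hzS
  have hgz_nonneg : 0 ≤ ∏ k, (z k - αhat k) :=
    Finset.prod_nonneg fun k _ => by
      have h1 := hax k; have h2 := hay k; simp only [hz]; linarith
  -- squared comparison: (g z)^2 > P^2
  have hsq : (∏ k, (x k - αhat k)) * ∏ k, (x k - αhat k)
      < (∏ k, (z k - αhat k)) * ∏ k, (z k - αhat k) := by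
    have key : ∏ k, ((x k - αhat k) * (y k - αhat k))
        < ∏ k, ((z k - αhat k) * (z k - αhat k)) := by
      refine Finset.prod_lt_prod (fun k _ => mul_pos (hax k) (hay k))
        (fun k _ => ?_) ⟨k0, Finset.mem_univ k0, ?_⟩
      · have h1 := hax k; have h2 := hay k
        simp only [hz]
        nlinarith [sq_nonneg (x k - y k)]
      · have h1 := hax k0; have h2 := hay k0
        simp only [hz]
        nlinarith [sq_pos_of_ne_zero (sub_ne_zero.2 (fun h : x k0 = y k0 => hk0 h.symm))]
    rw [Finset.prod_mul_distrib, Finset.prod_mul_distrib, hgy] at key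
    exact key
  nlinarith
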